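/- arXiv:math/9805123 — 8 statements merged into one kernel-verified Lean document; each statement's English description precedes it below -/
import Mathlib

section
/- For any positive integer n, the product of P(λ) over all partitions λ of n equals the product of F(λ) over all partitions λ of n, where for a partition λ = 1^{i_1} 2^{i_2} ⋯ (with i_k parts equal to k), P(λ) = 1^{i_1} · 2^{i_2} ⋯ and F(λ) = i_1! · i_2! ⋯. -/
/-- `P(λ) = ∏_k k^{i_k}`, the product of all parts of the partition. -/
def partitionP {n : ℕ} (l : Nat.Partition n) : ℕ := l.parts.prod

/-- `F(λ) = ∏_k (i_k)!`, the product of factorials of the multiplicities. -/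
def partitionF {n : ℕ} (l : Nat.Partition n) : ℕ :=
  ∏ k ∈ l.parts.toFinset, Nat.factorial (l.parts.count k)

/-!
Let `N(k, j)` be the number of partitions of `n` with `i_k ≥ j`. Since `k ^ i = ∏_{j ≤ i} k`
and `i ! = ∏_{j ≤ i} j`, the two sides are `∏_{k, j ≥ 1} k ^ N(k, j)` and
`∏_{k, j ≥ 1} j ^ N(k, j)`. Trading `j` parts equal to `k` for `k` parts equal to `j` is a
bijection between the partitions counted by `N(k, j)` and those counted by `N(j, k)`, so `N` is
symmetric and the two products agree.
-/

open Finset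

theorem Finset.prod_prod_Icc_eq_prod_pow_card {α M : Type*} [CommMonoid M] (s : Finset α)
    (c : α → ℕ) (f : ℕ → M) {n : ℕ} (hc : ∀ a ∈ s, c a ≤ n) :
    ∏ a ∈ s, ∏ j ∈ Icc 1 (c a), f j = ∏ j ∈ Icc 1 n, f j ^ #{a ∈ s | j ≤ c a} := by
  calc ∏ a ∈ s, ∏ j ∈ Icc 1 (c a), f j
      = ∏ a ∈ s, ∏ j ∈ Icc 1 n, if j ≤ c a then f j else 1 := by
        refine prod_congr rfl fun a ha => ?_
        rw [← prod_filter]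
        congr 1
        ext j
        simp only [mem_Icc, mem_filter]
        have := hc a ha
        omega
    _ = ∏ j ∈ Icc 1 n, ∏ a ∈ s, if j ≤ c a then f j else 1 := prod_comm
    _ = ∏ j ∈ Icc 1 n, f j ^ #{a ∈ s | j ≤ c a} := by
        simp only [← prod_filter, prod_const]

namespace Nat.Partition

variable {n : ℕ}

theorem card_parts_le (l : n.Partition) : Multiset.card l.parts ≤ n := by
  simpa [l.parts_sum] using Multiset.card_nsmul_le_sum fun _ hi => l.parts_pos hi

theorem count_parts_le (l : n.Partition) (k : ℕ) : l.parts.count k ≤ n :=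
  (Multiset.count_le_card k l.parts).trans l.card_parts_le

theorem prod_toFinset_eq_prod_Icc {M : Type*} [CommMonoid M] (l : n.Partition)
    (f : ℕ → ℕ → M) :
    ∏ k ∈ l.parts.toFinset, ∏ j ∈ Icc 1 (l.parts.count k), f k j =
      ∏ k ∈ Icc 1 n, ∏ j ∈ Icc 1 (l.parts.count k), f k j := by
  refine prod_subset (fun k hk => ?_) (fun k _ hk => ?_)
  · rw [Multiset.mem_toFinset] at hk
    exact mem_Icc.mpr ⟨l.parts_pos hk, le_of_mem_parts hk⟩
  · rw [Multiset.mem_toFinset, ← Multiset.count_eq_zero] at hk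
    simp [hk]

def exchangeParts {k j : ℕ} (hj : 0 < j) (l : {l : n.Partition // j ≤ l.parts.count k}) :
    {l : n.Partition // k ≤ l.parts.count j} :=
  have hle : Multiset.replicate j k ≤ l.1.parts := Multiset.le_count_iff_replicate_le.mp l.2
  ⟨⟨l.1.parts - Multiset.replicate j k + Multiset.replicate k j,
    fun hi => (Multiset.mem_add.mp hi).elim
      (fun h => l.1.parts_pos (Multiset.mem_of_le tsub_le_self h))
      fun h => Multiset.eq_of_mem_replicate h ▸ hj,
    by
      have hsum := congrArg Multiset.sum (tsub_add_cancel_of_le hle)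
      rw [Multiset.sum_add, Multiset.sum_replicate, smul_eq_mul, l.1.parts_sum] at hsum
      rw [Multiset.sum_add, Multiset.sum_replicate, smul_eq_mul, Nat.mul_comm k j, hsum]⟩,
    by simp⟩

theorem exchangeParts_exchangeParts {k j : ℕ} (hk : 0 < k) (hj : 0 < j)
    (l : {l : n.Partition // j ≤ l.parts.count k}) :
    exchangeParts hk (exchangeParts hj l) = l :=
  Subtype.ext <| Nat.Partition.ext <| by
    simp [exchangeParts, tsub_add_cancel_of_le (Multiset.le_count_iff_replicate_le.mp l.2)]

def exchangePartsEquiv {k j : ℕ} (hk : 0 < k) (hj : 0 < j) :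
    {l : n.Partition // j ≤ l.parts.count k} ≃ {l : n.Partition // k ≤ l.parts.count j} where
  toFun := exchangeParts hj
  invFun := exchangeParts hk
  left_inv := exchangeParts_exchangeParts hk hj
  right_inv := exchangeParts_exchangeParts hj hk

theorem card_le_count_comm {k j : ℕ} (hk : 0 < k) (hj : 0 < j) :
    #{l : n.Partition | j ≤ l.parts.count k} = #{l : n.Partition | k ≤ l.parts.count j} := by
  simp only [← Fintype.card_subtype]
  exact Fintype.card_congr (exchangePartsEquiv hk hj)

end Nat.Partition

open Nat.Partition

theorem partitionP_eq_prod_Icc {n : ℕ} (l : n.Partition) :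
    partitionP l = ∏ k ∈ Icc 1 n, ∏ _j ∈ Icc 1 (l.parts.count k), k := by
  rw [← prod_toFinset_eq_prod_Icc, partitionP, Finset.prod_multiset_count]
  simp

theorem partitionF_eq_prod_Icc {n : ℕ} (l : n.Partition) :
    partitionF l = ∏ k ∈ Icc 1 n, ∏ j ∈ Icc 1 (l.parts.count k), j := by
  rw [← prod_toFinset_eq_prod_Icc, partitionF]
  simp [← Finset.Ico_add_one_right_eq_Icc, Finset.prod_Ico_id_eq_factorial]

theorem prod_P_eq_prod_F_general (n : ℕ) :
    ∏ l : Nat.Partition n, partitionP l = ∏ l : Nat.Partition n, partitionF l := by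
  calc ∏ l : n.Partition, partitionP l
      = ∏ k ∈ Icc 1 n, ∏ l : n.Partition, ∏ _j ∈ Icc 1 (l.parts.count k), k := by
        simp only [partitionP_eq_prod_Icc]; exact prod_comm
    _ = ∏ k ∈ Icc 1 n, ∏ j ∈ Icc 1 n, k ^ #{l : n.Partition | j ≤ l.parts.count k} :=
        prod_congr rfl fun k _ => prod_prod_Icc_eq_prod_pow_card _ _ _ fun l _ => count_parts_le l k
    _ = ∏ k ∈ Icc 1 n, ∏ j ∈ Icc 1 n, j ^ #{l : n.Partition | j ≤ l.parts.count k} := by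
        rw [prod_comm]
        refine prod_congr rfl fun k hk => prod_congr rfl fun j hj => ?_
        rw [card_le_count_comm (mem_Icc.mp hj).1 (mem_Icc.mp hk).1]
    _ = ∏ k ∈ Icc 1 n, ∏ l : n.Partition, ∏ j ∈ Icc 1 (l.parts.count k), j :=
        prod_congr rfl fun k _ =>
          (prod_prod_Icc_eq_prod_pow_card _ _ _ fun l _ => count_parts_le l k).symm
    _ = ∏ l : n.Partition, partitionF l := by
        simp only [partitionF_eq_prod_Icc]; exact prod_comm

theorem prod_P_eq_prod_F (n : ℕ) (hn : 0 < n) :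
    ∏ l : Nat.Partition n, partitionP l = ∏ l : Nat.Partition n, partitionF l :=
  prod_P_eq_prod_F_general n
end

section
/- For a positive integer i, Σ_{λ ⊢ n} #{k : multiplicity of k in λ ≥ i} = Σ_{j>0} p(n − ji), i.e., the sum over partitions λ of n of the number of distinct parts of λ that occur at least i times equals Σ_{j>0} p(n − ji). -/
/-- the partition function `p(m)` -/
def partitionFun (m : ℕ) : ℕ := Fintype.card (Nat.Partition m)

/-- Removing `i` copies of `k` gives a bijection between partitions of `n` where `k`
occurs at least `i` times and partitions of `n - k * i`. -/
def removeEquiv (n k i : ℕ) (hk : 0 < k) (hki : k * i ≤ n) :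
    {l : Nat.Partition n // i ≤ l.parts.count k} ≃ Nat.Partition (n - k * i) where
  toFun l := ⟨l.1.parts - Multiset.replicate i k,
    fun {j} hj => l.1.parts_pos (Multiset.mem_of_le (tsub_le_self) hj), by
      have h : Multiset.replicate i k ≤ l.1.parts :=
        Multiset.le_count_iff_replicate_le.mp l.2
      have h2 : (l.1.parts - Multiset.replicate i k).sum + (Multiset.replicate i k).sum
          = l.1.parts.sum := by
        rw [← Multiset.sum_add, tsub_add_cancel_of_le h]
      rw [Multiset.sum_replicate, smul_eq_mul, l.1.parts_sum, mul_comm i k] at h2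
      omega⟩
  invFun m := ⟨⟨m.parts + Multiset.replicate i k,
      fun {j} hj => by
        rcases Multiset.mem_add.mp hj with h | h
        · exact m.parts_pos h
        · rw [Multiset.eq_of_mem_replicate h]; exact hk,
      by
        rw [Multiset.sum_add, Multiset.sum_replicate, smul_eq_mul, m.parts_sum, mul_comm i k]
        omega⟩,
    by simp only [Multiset.count_add, Multiset.count_replicate_self]; omega⟩
  left_inv l := by
    apply Subtype.ext
    apply Nat.Partition.ext
    exact tsub_add_cancel_of_le (Multiset.le_count_iff_replicate_le.mp l.2)
  right_inv m := by
    apply Nat.Partition.ext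
    exact add_tsub_cancel_right _ _

theorem sum_card_parts_with_high_multiplicity (n i : ℕ) (hn : 0 < n) (hi : 0 < i) :
    (∑ l : Nat.Partition n, (l.parts.toFinset.filter fun k => i ≤ l.parts.count k).card)
      = ∑ j ∈ Finset.Icc 1 n, if j * i ≤ n then partitionFun (n - j * i) else 0 := by
  have step1 : ∀ l : Nat.Partition n,
      (l.parts.toFinset.filter fun k => i ≤ l.parts.count k).card
        = ∑ k ∈ Finset.Icc 1 n, if i ≤ l.parts.count k then 1 else 0 := by
    intro l
    have hfil : (l.parts.toFinset.filter fun k => i ≤ l.parts.count k)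
        = (Finset.Icc 1 n).filter (fun k => i ≤ l.parts.count k) := by
      ext k
      simp only [Finset.mem_filter, Multiset.mem_toFinset, Finset.mem_Icc]
      constructor
      · rintro ⟨hm, hc⟩
        refine ⟨⟨l.parts_pos hm, ?_⟩, hc⟩
        have := Multiset.single_le_sum (fun x _ => Nat.zero_le x) k hm
        rwa [l.parts_sum] at this
      · rintro ⟨_, hc⟩
        exact ⟨Multiset.count_pos.mp (lt_of_lt_of_le hi hc), hc⟩
    rw [hfil, Finset.card_filter]
  calc (∑ l : Nat.Partition n, (l.parts.toFinset.filter fun k => i ≤ l.parts.count k).card)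
      = ∑ l : Nat.Partition n, ∑ k ∈ Finset.Icc 1 n,
          if i ≤ l.parts.count k then 1 else 0 := by
        exact Finset.sum_congr rfl fun l _ => step1 l
    _ = ∑ k ∈ Finset.Icc 1 n, ∑ l : Nat.Partition n,
          if i ≤ l.parts.count k then 1 else 0 := Finset.sum_comm
    _ = ∑ j ∈ Finset.Icc 1 n, if j * i ≤ n then partitionFun (n - j * i) else 0 := by
        refine Finset.sum_congr rfl fun k hk => ?_
        rw [Finset.mem_Icc] at hk
        rw [← Finset.card_filter, ← Fintype.card_subtype]
        by_cases h : k * i ≤ n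
        · rw [if_pos h, Fintype.card_congr (removeEquiv n k i hk.1 h)]
          rfl
        · rw [if_neg h]
          rw [Fintype.card_eq_zero_iff]
          constructor
          rintro ⟨l, hl⟩
          have hrep : Multiset.replicate i k ≤ l.parts :=
            Multiset.le_count_iff_replicate_le.mp hl
          have h2 : (l.parts - Multiset.replicate i k).sum + (Multiset.replicate i k).sum
              = l.parts.sum := by
            rw [← Multiset.sum_add, tsub_add_cancel_of_le hrep]
          rw [Multiset.sum_replicate, smul_eq_mul, l.parts_sum, mul_comm i k] at h2
          omega
end

section
/- In a bialgebra H over a commutative ring R, the set of liftable elements is closed under addition and under scalar multiplication by elements of R; in particular it forms an R-submodule of H. -/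
open TensorProduct Coalgebra

variable {R H : Type*} [CommRing R] [Ring H] [Bialgebra R H]

/-- `a₁` is liftable if there is a group-like series `∑ aₙ zⁿ` with `a₀ = 1`, `a₁` the
given element, and `Δ(aₙ) = ∑_{m ≤ n} aₘ ⊗ a_{n-m}` for all `n`. -/
def Liftable (R : Type*) {H : Type*} [CommRing R] [Ring H] [Bialgebra R H] (x : H) : Prop :=
  ∃ a : ℕ → H, a 0 = 1 ∧ a 1 = x ∧
    ∀ n, comul (R := R) (a n) = ∑ m ∈ Finset.range (n + 1), a m ⊗ₜ[R] a (n - m)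

open PowerSeries in
/-- Coefficients of the product of the left- and right-embedded series. -/
private lemma coeff_LR (f g : PowerSeries H) (n : ℕ) :
    PowerSeries.coeff (R := H ⊗[R] H) n
      (PowerSeries.map (Algebra.TensorProduct.includeLeft (S := R)).toRingHom f *
       PowerSeries.map (Algebra.TensorProduct.includeRight (R := R) (A := H)).toRingHom g) =
      ∑ p ∈ Finset.HasAntidiagonal.antidiagonal n, (PowerSeries.coeff (R := H) p.1 f) ⊗ₜ[R]
        (PowerSeries.coeff (R := H) p.2 g) := by
  rw [PowerSeries.coeff_mul]
  refine Finset.sum_congr rfl fun p _ => ?_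
  simp [Algebra.TensorProduct.includeLeft_apply, Algebra.TensorProduct.includeRight_apply,
    Algebra.TensorProduct.tmul_mul_tmul]

open PowerSeries in
/-- The right-embedding of one series commutes with the left-embedding of another. -/
private lemma RL_comm (f g : PowerSeries H) :
    PowerSeries.map (Algebra.TensorProduct.includeRight (R := R) (A := H)).toRingHom f *
      PowerSeries.map (Algebra.TensorProduct.includeLeft (S := R)).toRingHom g =
    PowerSeries.map (Algebra.TensorProduct.includeLeft (S := R)).toRingHom g *
      PowerSeries.map (Algebra.TensorProduct.includeRight (R := R) (A := H)).toRingHom f := by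
  ext n
  rw [PowerSeries.coeff_mul, PowerSeries.coeff_mul]
  rw [← Finset.Nat.sum_antidiagonal_swap]
  refine Finset.sum_congr rfl fun p _ => ?_
  simp [Algebra.TensorProduct.includeLeft_apply, Algebra.TensorProduct.includeRight_apply,
    Algebra.TensorProduct.tmul_mul_tmul]

/-- Reformulation of the liftability condition via power series. -/
private lemma liftable_iff (x : H) :
    Liftable R x ↔ ∃ A : PowerSeries H, PowerSeries.coeff (R := H) 0 A = 1 ∧
      PowerSeries.coeff (R := H) 1 A = x ∧
      PowerSeries.map (Bialgebra.comulAlgHom R H).toRingHom A =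
        PowerSeries.map (Algebra.TensorProduct.includeLeft (S := R)).toRingHom A *
        PowerSeries.map (Algebra.TensorProduct.includeRight (R := R) (A := H)).toRingHom A := by
  constructor
  · rintro ⟨a, h0, h1, hc⟩
    refine ⟨PowerSeries.mk a, by simpa using h0, by simpa using h1, ?_⟩
    ext n
    rw [PowerSeries.coeff_map, coeff_LR, Finset.Nat.sum_antidiagonal_eq_sum_range_succ_mk]
    simpa using hc n
  · rintro ⟨A, h0, h1, hc⟩
    refine ⟨fun n => PowerSeries.coeff (R := H) n A, h0, h1, fun n => ?_⟩
    have := congrArg (PowerSeries.coeff (R := H ⊗[R] H) n) hc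
    rw [PowerSeries.coeff_map, coeff_LR, Finset.Nat.sum_antidiagonal_eq_sum_range_succ_mk] at this
    simpa using this

private lemma liftable_add (x y : H) (hx : Liftable R x) (hy : Liftable R y) :
    Liftable R (x + y) := by
  rw [liftable_iff] at hx hy ⊢
  obtain ⟨A, hA0, hA1, hA⟩ := hx
  obtain ⟨B, hB0, hB1, hB⟩ := hy
  refine ⟨A * B, ?_, ?_, ?_⟩
  · rw [PowerSeries.coeff_zero_eq_constantCoeff, map_mul]
    simp only [← PowerSeries.coeff_zero_eq_constantCoeff, hA0, hB0, one_mul]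
  · rw [PowerSeries.coeff_mul, Finset.Nat.sum_antidiagonal_eq_sum_range_succ_mk,
      Finset.sum_range_succ, Finset.sum_range_one]
    simp [hA0, hA1, hB0, hB1, add_comm]
  · rw [map_mul, hA, hB, map_mul, map_mul]
    rw [mul_assoc, ← mul_assoc (PowerSeries.map _ A)
      (PowerSeries.map (Algebra.TensorProduct.includeLeft (S := R)).toRingHom B), RL_comm]
    simp only [mul_assoc]

private lemma liftable_smul (r : R) (x : H) (hx : Liftable R x) : Liftable R (r • x) := by
  obtain ⟨a, h0, h1, hc⟩ := hx
  refine ⟨fun n => r ^ n • a n, by simp [h0], by simp [h1], fun n => ?_⟩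
  rw [map_smul, hc, Finset.smul_sum]
  refine Finset.sum_congr rfl fun m hm => ?_
  have hmn : (n - m) + m = n := Nat.sub_add_cancel (Nat.lt_succ_iff.mp (Finset.mem_range.mp hm))
  show r ^ n • (a m ⊗ₜ[R] a (n - m)) = (r ^ m • a m) ⊗ₜ[R] (r ^ (n - m) • a (n - m))
  rw [smul_tmul', tmul_smul, smul_tmul', smul_smul, ← pow_add, hmn]

private lemma liftable_zero : Liftable R (0 : H) := by
  refine ⟨fun n => if n = 0 then 1 else 0, by simp, by simp, fun n => ?_⟩
  rcases Nat.eq_zero_or_pos n with h | h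
  · subst h; simp [Algebra.TensorProduct.one_def]
  · show comul (R := R) (if n = 0 then (1 : H) else 0) = _
    rw [if_neg h.ne', map_zero, eq_comm]
    refine Finset.sum_eq_zero fun m _ => ?_
    show (if m = 0 then (1 : H) else 0) ⊗ₜ[R] (if n - m = 0 then (1 : H) else 0) = 0
    rcases Nat.eq_zero_or_pos m with h' | h'
    · subst h'
      rw [Nat.sub_zero, if_neg h.ne', TensorProduct.tmul_zero]
    · rw [if_neg h'.ne', TensorProduct.zero_tmul]

theorem liftable_submodule :
    (∀ x y : H, Liftable R x → Liftable R y → Liftable R (x + y)) ∧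
    (∀ (r : R) (x : H), Liftable R x → Liftable R (r • x)) ∧
    ∃ M : Submodule R H, ∀ x : H, x ∈ M ↔ Liftable R x := by
  refine ⟨liftable_add, liftable_smul, ⟨⟨⟨⟨{x | Liftable R x}, ?_⟩, ?_⟩, ?_⟩, fun _ => Iff.rfl⟩⟩
  · exact fun hx hy => liftable_add _ _ hx hy
  · exact liftable_zero
  · exact fun r {x} hx => liftable_smul r x hx
end

section
/- Let H be a torsion-free coalgebra over ℤ such that for every prime p, every primitive element of H/pH is the image of a primitive element of H. Then for every positive integer N, every primitive element of H/NH is the image of a primitive element of H. -/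
open TensorProduct Coalgebra

lemma flat_int' (M : Type*) [AddCommGroup M] [Module ℤ M]
    (hM : ∀ c : ℤ, c ≠ 0 → Function.Injective (LinearMap.lsmul ℤ M c)) :
    Module.Flat ℤ M := by
  rw [Module.Flat.iff_rTensor_injective']
  intro I
  obtain ⟨n, hI⟩ := (IsPrincipalIdealRing.principal I).principal
  rw [Ideal.submodule_span_eq] at hI
  subst hI
  have hn : (n : ℤ) ∈ Ideal.span {n} := Ideal.mem_span_singleton_self n
  have key : ∀ u : ↥(Ideal.span {n}) ⊗[ℤ] M,
      ∃ m : M, u = (⟨n, hn⟩ : ↥(Ideal.span {n})) ⊗ₜ[ℤ] m := by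
    intro u
    induction u using TensorProduct.induction_on with
    | zero => exact ⟨0, by simp⟩
    | tmul a m =>
        obtain ⟨c, hc⟩ := Ideal.mem_span_singleton'.mp a.2
        have ha : a = c • (⟨n, hn⟩ : ↥(Ideal.span {n})) := Subtype.ext (by simpa using hc.symm)
        refine ⟨LinearMap.lsmul ℤ M c m, ?_⟩
        rw [ha, LinearMap.lsmul_apply, ← smul_tmul']
        exact ((TensorProduct.mk ℤ _ M _).map_smul c m).symm
    | add u v hu hv =>
        obtain ⟨m₁, rfl⟩ := hu
        obtain ⟨m₂, rfl⟩ := hv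
        exact ⟨m₁ + m₂, by rw [tmul_add]⟩
  rw [injective_iff_map_eq_zero]
  intro u hu
  obtain ⟨m, rfl⟩ := key u
  rw [LinearMap.rTensor_tmul] at hu
  have h3 := congrArg (TensorProduct.lid ℤ M) hu
  simp only [map_zero, lid_tmul, Submodule.coe_subtype] at h3
  rcases eq_or_ne n 0 with rfl | hn0
  · have h4 : (⟨(0:ℤ), hn⟩ : ↥(Ideal.span {(0:ℤ)})) = 0 := rfl
    rw [h4, zero_tmul]
  · have h5 : m = 0 := hM n hn0 (by simp only [LinearMap.lsmul_apply, map_zero]; simpa using h3)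
    rw [h5, tmul_zero]

/-- Lemma 2.8: if `H` is a torsion-free coalgebra over `ℤ` (with a distinguished
group-like element `g` playing the role of `1`) such that for every prime `p` every
primitive element of `H/pH` lifts to a primitive element of `H`, then for every positive
integer `N` every primitive element of `H/NH` lifts to a primitive element of `H`.
Primitivity modulo `N` of `x` is expressed as
`Δ(x) - (x ⊗ g + g ⊗ x) ∈ N·(H ⊗ H)`. -/
theorem primitive_mod_N_lifts
    (H : Type*) [AddCommGroup H] [Module ℤ H] [Coalgebra ℤ H]
    [NoZeroSMulDivisors ℤ H]
    (g : H) (hg : comul (R := ℤ) g = g ⊗ₜ[ℤ] g) (hgc : counit (R := ℤ) g = 1)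
    (hp : ∀ p : ℕ, p.Prime → ∀ x : H,
      (∃ t : H ⊗[ℤ] H, comul (R := ℤ) x - (x ⊗ₜ[ℤ] g + g ⊗ₜ[ℤ] x) = (p : ℤ) • t) →
      ∃ y z : H, comul (R := ℤ) y = y ⊗ₜ[ℤ] g + g ⊗ₜ[ℤ] y ∧ x = y + (p : ℤ) • z)
    (N : ℕ) (hN : 0 < N) :
    ∀ x : H,
      (∃ t : H ⊗[ℤ] H, comul (R := ℤ) x - (x ⊗ₜ[ℤ] g + g ⊗ₜ[ℤ] x) = (N : ℤ) • t) →
      ∃ y z : H, comul (R := ℤ) y = y ⊗ₜ[ℤ] g + g ⊗ₜ[ℤ] y ∧ x = y + (N : ℤ) • z := by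
  -- torsion-freeness of `H`, phrased via `lsmul`
  have hH : ∀ c : ℤ, c ≠ 0 → Function.Injective (LinearMap.lsmul ℤ H c) := by
    intro c hc a b hab
    simp only [LinearMap.lsmul_apply] at hab
    have h1 : c • a = c • b := by
      rw [← Int.cast_smul_eq_zsmul ℤ c a, ← Int.cast_smul_eq_zsmul ℤ c b, Int.cast_id]
      exact hab
    have h2 : c • (a - b) = (0 : H) := by rw [zsmul_sub, h1, sub_self]
    rcases eq_zero_or_eq_zero_of_smul_eq_zero h2 with h | h
    · exact absurd h hc
    · exact sub_eq_zero.mp h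
  haveI := flat_int' H hH
  -- tensoring with `c • a` on either side, for the ℤ-smul appearing in the statement
  have hztl : ∀ (c : ℤ) (a b : H), (c • a) ⊗ₜ[ℤ] b = c • (a ⊗ₜ[ℤ] b) := by
    intro c a b
    exact AddMonoidHom.map_zsmul
      (AddMonoidHom.mk' (fun a' : H => a' ⊗ₜ[ℤ] b) (fun a₁ a₂ => add_tmul a₁ a₂ b)) c a
  have hztr : ∀ (c : ℤ) (a b : H), a ⊗ₜ[ℤ] (c • b) = c • (a ⊗ₜ[ℤ] b) := by
    intro c a b
    exact AddMonoidHom.map_zsmul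
      (AddMonoidHom.mk' (fun b' : H => a ⊗ₜ[ℤ] b') (fun b₁ b₂ => tmul_add a b₁ b₂)) c b
  have hcm : ∀ (c : ℤ) (w : H), comul (R := ℤ) (c • w) = c • comul (R := ℤ) w := by
    intro c w
    exact AddMonoidHom.map_zsmul
      (AddMonoidHom.mk' (fun w' : H => comul (R := ℤ) w') (fun w₁ w₂ => map_add _ w₁ w₂)) c w
  have hlsg : ∀ (c : ℤ) (w : H), LinearMap.lsmul ℤ H c w = c • w := fun c w =>
    Int.cast_smul_eq_zsmul ℤ c w
  -- cancellation of a nonzero integer in `H ⊗ H`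
  have hcancel : ∀ (c : ℤ), c ≠ 0 → ∀ u v : H ⊗[ℤ] H, c • u = c • v → u = v := by
    intro c hc u v huv
    have hinj : Function.Injective (LinearMap.rTensor H (LinearMap.lsmul ℤ H c)) :=
      Module.Flat.rTensor_preserves_injective_linearMap _ (hH c hc)
    apply hinj
    have hb : ∀ w : H ⊗[ℤ] H, LinearMap.rTensor H (LinearMap.lsmul ℤ H c) w = c • w := by
      intro w
      induction w using TensorProduct.induction_on with
      | zero => rw [map_zero]; exact (zsmul_zero c).symm
      | tmul a b =>
          rw [LinearMap.rTensor_tmul, hlsg, hztl]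
      | add w₁ w₂ h₁ h₂ => rw [map_add, h₁, h₂, zsmul_add]
    rw [hb, hb, huv]
  -- main induction on the number of prime factors of `N`
  suffices key : ∀ n : ℕ, 0 < n → ∀ x : H,
      (∃ t : H ⊗[ℤ] H, comul (R := ℤ) x - (x ⊗ₜ[ℤ] g + g ⊗ₜ[ℤ] x) = (n : ℤ) • t) →
      ∃ y z : H, comul (R := ℤ) y = y ⊗ₜ[ℤ] g + g ⊗ₜ[ℤ] y ∧ x = y + (n : ℤ) • z by
    exact key N hN
  intro n
  induction n using Nat.strong_induction_on with
  | _ n IH =>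
    intro hn x hx
    obtain ⟨t, ht⟩ := hx
    rcases eq_or_ne n 1 with rfl | hn1
    · refine ⟨0, x, ?_, by simp⟩
      simp [tmul_zero, zero_tmul]
    -- n has a prime factor p
    · have h2 : 2 ≤ n := by omega
      set p := n.minFac with hpdef
      have hprime : p.Prime := Nat.minFac_prime hn1
      set m := n / p with hmdef
      have hpm : p * m = n := Nat.mul_div_cancel' (Nat.minFac_dvd n) 
      have hmlt : m < n := Nat.div_lt_self hn hprime.one_lt
      have hmpos : 0 < m := Nat.div_pos (Nat.minFac_le hn) hprime.pos
      have hcast : (n : ℤ) = (p : ℤ) * (m : ℤ) := by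
        rw [← hpm]; push_cast; ring
      -- x is primitive mod p
      have hxp : ∃ t' : H ⊗[ℤ] H,
          comul (R := ℤ) x - (x ⊗ₜ[ℤ] g + g ⊗ₜ[ℤ] x) = (p : ℤ) • t' := by
        refine ⟨(m : ℤ) • t, ?_⟩
        rw [ht, hcast, mul_zsmul]
      obtain ⟨y, z, hy, hxyz⟩ := hp p hprime x hxp
      -- compute the defect of z
      have hdef : (p : ℤ) • (comul (R := ℤ) z - (z ⊗ₜ[ℤ] g + g ⊗ₜ[ℤ] z))
          = (p : ℤ) • ((m : ℤ) • t) := by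
        have expand : comul (R := ℤ) x - (x ⊗ₜ[ℤ] g + g ⊗ₜ[ℤ] x)
            = (p : ℤ) • (comul (R := ℤ) z - (z ⊗ₜ[ℤ] g + g ⊗ₜ[ℤ] z)) := by
          rw [hxyz, map_add, hcm, hy, add_tmul, tmul_add, hztl, hztr, zsmul_sub, zsmul_add]
          abel
        rw [← expand, ht, hcast, mul_zsmul]
      have hz : comul (R := ℤ) z - (z ⊗ₜ[ℤ] g + g ⊗ₜ[ℤ] z) = (m : ℤ) • t :=
        hcancel (p : ℤ) (by exact_mod_cast hprime.ne_zero) _ _ hdef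
      obtain ⟨y', z', hy', hz'⟩ := IH m hmlt hmpos z ⟨t, hz⟩
      refine ⟨y + (p : ℤ) • y', z', ?_, ?_⟩
      · rw [map_add, hcm, hy, hy', add_tmul, tmul_add, hztl, hztr, zsmul_add]
        abel
      · rw [hxyz, hz', zsmul_add, hcast, mul_zsmul]
        abel
end

section
/- If a coalgebra H over a commutative ring R has a structural basis {Z_α : α ∈ ℤ_{≥0}^{(I)}}, then the R-module of primitive elements of H is free with basis the elements Z_{ε_i} for i ∈ I, where ε_i is the indicator function of i. -/
/-!
Write `x = ∑ c_α Z_α`. Since `Δ` sends `Z_α` to the sum of `Z_β ⊗ Z_γ` over `β + γ = α`, the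
coordinate of `Δ x` at `Z_β ⊗ Z_γ` is `c_{β+γ}`; for primitive `x` it is also
`c_β δ_{γ,0} + δ_{β,0} c_γ`. Hence `c_0 = 2 c_0 = 0`, and `c` vanishes on every sum of two
nonzero multi-indices, i.e. everywhere except at the unit vectors `ε_i`.
-/

open TensorProduct Coalgebra

open Finset.HasAntidiagonal (antidiagonal mem_antidiagonal)

section StructuralBasis

variable {R H A : Type*} [CommSemiring R] [AddCommMonoid H] [Module R H] [Coalgebra R H]
  [AddCommMonoid A] [Finset.HasAntidiagonal A]

def Module.Basis.IsAntidiagonalComul (Z : Module.Basis A R H) : Prop :=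
  ∀ α, comul (R := R) (Z α) = ∑ p ∈ antidiagonal α, Z p.1 ⊗ₜ[R] Z p.2

theorem Module.Basis.tensorProduct_repr_comul_apply (Z : Module.Basis A R H)
    (hZ : Z.IsAntidiagonalComul) (x : H) (β γ : A) :
    (Z.tensorProduct Z).repr (comul (R := R) x) (β, γ) = Z.repr x (β + γ) := by
  classical
  let coordComul : H →ₗ[R] R :=
    Finsupp.lapply (β, γ) ∘ₗ (Z.tensorProduct Z).repr.toLinearMap ∘ₗ comul
  let coord : H →ₗ[R] R := Finsupp.lapply (β + γ) ∘ₗ Z.repr.toLinearMap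
  suffices coordComul = coord from LinearMap.congr_fun this x
  refine Z.ext fun α => ?_
  simp only [coordComul, coord, LinearMap.coe_comp, Function.comp_apply, LinearEquiv.coe_coe,
    Finsupp.lapply_apply, hZ α, map_sum, ← Module.Basis.tensorProduct_apply, Module.Basis.repr_self,
    Finsupp.single_apply, Prod.mk.eta]
  rw [Finset.sum_ite_eq']
  simp only [mem_antidiagonal, eq_comm]

end StructuralBasis

section Primitive

variable {R H A : Type*} [CommRing R] [AddCommMonoid H] [Module R H] [Coalgebra R H]
  [AddCommMonoid A] [Finset.HasAntidiagonal A]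

theorem Module.Basis.repr_add_of_comul_eq (Z : Module.Basis A R H)
    (hZ : Z.IsAntidiagonalComul)
    {x : H} (hx : comul (R := R) x = x ⊗ₜ[R] Z 0 + Z 0 ⊗ₜ[R] x) (β γ : A) :
    Z.repr x (β + γ) = Finsupp.single 0 1 γ * Z.repr x β + Z.repr x γ * Finsupp.single 0 1 β := by
  have := congr((Z.tensorProduct Z).repr $hx (β, γ))
  rwa [Z.tensorProduct_repr_comul_apply hZ, LinearEquiv.map_add, Finsupp.add_apply,
    Module.Basis.tensorProduct_repr_tmul_apply, Module.Basis.tensorProduct_repr_tmul_apply,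
    Module.Basis.repr_self, smul_eq_mul, smul_eq_mul] at this

theorem Module.Basis.repr_zero_eq_zero_of_comul_eq (Z : Module.Basis A R H)
    (hZ : Z.IsAntidiagonalComul)
    {x : H} (hx : comul (R := R) x = x ⊗ₜ[R] Z 0 + Z 0 ⊗ₜ[R] x) :
    Z.repr x 0 = 0 := by
  simpa using Z.repr_add_of_comul_eq hZ hx 0 0

theorem Module.Basis.repr_add_eq_zero_of_comul_eq (Z : Module.Basis A R H)
    (hZ : Z.IsAntidiagonalComul)
    {x : H} (hx : comul (R := R) x = x ⊗ₜ[R] Z 0 + Z 0 ⊗ₜ[R] x) {β γ : A}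
    (hβ : β ≠ 0) (hγ : γ ≠ 0) :
    Z.repr x (β + γ) = 0 := by
  simp [Z.repr_add_of_comul_eq hZ hx, hβ, hγ]

end Primitive

theorem Finsupp.exists_single_one_eq_of_forall_add_eq {I : Type*} {α : I →₀ ℕ} (hα : α ≠ 0)
    (h : ∀ β γ, β + γ = α → β = 0 ∨ γ = 0) : ∃ i, single i 1 = α := by
  obtain ⟨i, hi⟩ := Finsupp.ne_iff.mp hα
  have hle : single i 1 ≤ α := Finsupp.single_le_iff.mpr (Nat.one_le_iff_ne_zero.mpr hi)
  refine ⟨i, ?_⟩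
  rcases h (single i 1) (α - single i 1) (add_tsub_cancel_of_le hle) with h1 | h2
  · exact absurd h1 (by simp)
  · exact hle.antisymm (tsub_eq_zero_iff_le.mp h2)

section MonomialIndex

variable {R H I : Type*} [DecidableEq I] [CommRing R] [AddCommMonoid H] [Module R H] [Coalgebra R H]

theorem Module.Basis.comul_single_one (Z : Module.Basis (I →₀ ℕ) R H)
    (hZ : Z.IsAntidiagonalComul) (i : I) :
    comul (R := R) (Z (Finsupp.single i 1))
      = Z (Finsupp.single i 1) ⊗ₜ[R] Z 0 + Z 0 ⊗ₜ[R] Z (Finsupp.single i 1) := by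
  rw [hZ, Finsupp.antidiagonal_single, show (1 : ℕ) = 0 + 1 from rfl,
    Finset.Nat.antidiagonal_succ]
  simp [Prod.map, add_comm]

theorem Module.Basis.repr_support_subset_of_comul_eq (Z : Module.Basis (I →₀ ℕ) R H)
    (hZ : Z.IsAntidiagonalComul)
    {x : H} (hx : comul (R := R) x = x ⊗ₜ[R] Z 0 + Z 0 ⊗ₜ[R] x) :
    ((Z.repr x).support : Set (I →₀ ℕ)) ⊆ Set.range fun i => Finsupp.single i 1 := by
  intro α hα
  have hcα : Z.repr x α ≠ 0 := Finsupp.mem_support_iff.mp hα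
  refine Finsupp.exists_single_one_eq_of_forall_add_eq ?_ fun β γ hαβγ => ?_
  · rintro rfl
    exact hcα (Z.repr_zero_eq_zero_of_comul_eq hZ hx)
  · by_contra! hβγ
    exact hcα (hαβγ ▸ Z.repr_add_eq_zero_of_comul_eq hZ hx hβγ.1 hβγ.2)

end MonomialIndex

theorem primitives_of_structural_basis_general
    (R H I : Type*) [DecidableEq I] [CommRing R] [AddCommGroup H] [Module R H] [Coalgebra R H]
    (Z : Module.Basis (I →₀ ℕ) R H)
    (hZ : ∀ α : I →₀ ℕ,
      comul (R := R) (Z α) = ∑ p ∈ Finset.HasAntidiagonal.antidiagonal α, Z p.1 ⊗ₜ[R] Z p.2) :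
    (∀ i : I, comul (R := R) (Z (Finsupp.single i 1))
        = Z (Finsupp.single i 1) ⊗ₜ[R] Z 0 + Z 0 ⊗ₜ[R] Z (Finsupp.single i 1)) ∧
    LinearIndependent R (fun i : I => Z (Finsupp.single i 1)) ∧
    ∀ x : H, comul (R := R) x = x ⊗ₜ[R] Z 0 + Z 0 ⊗ₜ[R] x →
      x ∈ Submodule.span R (Set.range fun i : I => Z (Finsupp.single i 1)) := by
  refine ⟨Z.comul_single_one hZ,
    Z.linearIndependent.comp _ (Finsupp.single_left_injective one_ne_zero), fun x hx => ?_⟩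
  rw [Set.range_comp', Z.mem_span_image]
  exact Z.repr_support_subset_of_comul_eq hZ hx

/-- Lemma 2.4: if a coalgebra `H` over `R` has a structural basis `{Z_α}` (indexed by
finitely supported functions `α : I → ℕ`, with `Δ(Z_α) = ∑_{β ≤ α} Z_β ⊗ Z_{α-β}` and
`ε(Z_α) = δ_{α,0}`), then the `R`-module of primitive elements is free with basis the
elements `Z_{ε_i}`, `i ∈ I` (primitivity is with respect to the group-like element
`Z_0`, which plays the role of `1`). -/
theorem primitives_of_structural_basis
    (R H I : Type*) [DecidableEq I] [CommRing R] [AddCommGroup H] [Module R H] [Coalgebra R H]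
    (Z : Module.Basis (I →₀ ℕ) R H)
    (hZ : ∀ α : I →₀ ℕ,
      comul (R := R) (Z α) = ∑ p ∈ Finset.HasAntidiagonal.antidiagonal α, Z p.1 ⊗ₜ[R] Z p.2)
    (hZc : ∀ α : I →₀ ℕ, counit (R := R) (Z α) = if α = 0 then 1 else 0) :
    (∀ i : I, comul (R := R) (Z (Finsupp.single i 1))
        = Z (Finsupp.single i 1) ⊗ₜ[R] Z 0 + Z 0 ⊗ₜ[R] Z (Finsupp.single i 1)) ∧
    LinearIndependent R (fun i : I => Z (Finsupp.single i 1)) ∧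
    ∀ x : H, comul (R := R) x = x ⊗ₜ[R] Z 0 + Z 0 ⊗ₜ[R] x →
      x ∈ Submodule.span R (Set.range fun i : I => Z (Finsupp.single i 1)) :=
  primitives_of_structural_basis_general R H I Z hZ
end

section
/- Let H be a coalgebra over ℤ and p a prime, and suppose {Z_α : α ∈ ℤ_{≥0}^{(I)}} are elements of H/pH satisfying Δ(Z_α) = Σ_{0≤β≤α} Z_β ⊗ Z_{α−β}. Then the Verschiebung (shift) operator V_p on H/pH satisfies V_p(Z_α) = Z_{α/p}, where Z_{α/p} = 0 if p does not divide every coordinate of α. -/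
/-!
For a functional `f` on `H`, the values `f (Z d)` are the coefficients of a power series `g_f`;
the structural relations say exactly that convolution of functionals becomes multiplication of
these series, so `f (V (Z α))` is the `α`-coefficient of `g_f ^ p`. Over `𝔽_p` the Frobenius
acts trivially on coefficients, so `g_f ^ p = g_f(X ^ p)`, whose `α`-coefficient is
`f (Z (α / p))`, or `0` when `p ∤ α`. Functionals separate points, which gives the claim.
-/

open TensorProduct Coalgebra

section
variable {R H : Type*} [CommRing R] [AddCommGroup H] [Module R H] [Coalgebra R H]

/-- Convolution product on the dual algebra `H*` of a coalgebra `H`: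
`(f * g)(x) = (f ⊗ g)(Δ x)`. -/
noncomputable def convMul (f g : H →ₗ[R] R) : H →ₗ[R] R :=
  LinearMap.mul' R R ∘ₗ TensorProduct.map f g ∘ₗ comul (R := R)

/-- Convolution powers `f^n` in the dual algebra, with `f^0 = ε`. -/
noncomputable def convPow (f : H →ₗ[R] R) : ℕ → (H →ₗ[R] R)
  | 0 => counit (R := R)
  | n + 1 => convMul (convPow f n) f
end

namespace MvPowerSeries

variable {σ R : Type*}

theorem coeff_expand_of_forall_ne_nsmul [CommRing R] (p : ℕ) (hp : p ≠ 0)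
    (φ : MvPowerSeries σ R) {m : σ →₀ ℕ} (h : ∀ n : σ →₀ ℕ, m ≠ p • n) :
    coeff m (expand p hp φ) = 0 := by
  by_contra hm
  obtain ⟨n, -, rfl⟩ := support_expand_subset p hp φ hm
  exact h n rfl

theorem pow_char_eq_expand_zmod {p : ℕ} [hp : Fact p.Prime] (φ : MvPowerSeries σ (ZMod p)) :
    φ ^ p = expand p hp.out.ne_zero φ := by
  rw [← map_frobenius_expand p hp.out.ne_zero, ZMod.frobenius_zmod, map_id, RingHom.id_apply]

end MvPowerSeries

section

variable {R H σ : Type*} [CommRing R] [AddCommGroup H] [Module R H]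

def genSeries (Z : (σ →₀ ℕ) → H) (f : H →ₗ[R] R) : MvPowerSeries σ R :=
  fun d => f (Z d)

theorem coeff_genSeries (Z : (σ →₀ ℕ) → H) (f : H →ₗ[R] R) (d : σ →₀ ℕ) :
    MvPowerSeries.coeff d (genSeries Z f) = f (Z d) :=
  rfl

theorem convPow_apply_eq_coeff_genSeries_pow [Coalgebra R H] [DecidableEq σ] {Z : (σ →₀ ℕ) → H}
    (hZ : ∀ α, comul (R := R) (Z α) =
      ∑ q ∈ Finset.HasAntidiagonal.antidiagonal α, Z q.1 ⊗ₜ[R] Z q.2)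
    (hZc : ∀ α, counit (R := R) (Z α) = if α = 0 then 1 else 0)
    (f : H →ₗ[R] R) (n : ℕ) (α : σ →₀ ℕ) :
    convPow f n (Z α) = MvPowerSeries.coeff α (genSeries Z f ^ n) := by
  induction n generalizing α with
  | zero => rw [convPow, hZc, pow_zero, MvPowerSeries.coeff_one]
  | succ n ih =>
    rw [convPow, pow_succ, MvPowerSeries.coeff_mul]
    simp only [convMul, LinearMap.comp_apply, hZ, map_sum, TensorProduct.map_tmul,
      LinearMap.mul'_apply, ih, coeff_genSeries]

end

/-- Lemma 2.11: if `Z_α` (`α ∈ ℤ_{≥0}^{(I)}`) are elements of a coalgebra `H` over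
`𝔽_p = ZMod p` satisfying the structural relations, and `V` is the Verschiebung (the
operator dual to the Frobenius `f ↦ f^p` on the dual algebra `H*`), then
`V(Z_α) = Z_{α/p}`, where `Z_{α/p} = 0` if `p` does not divide `α`. -/
theorem verschiebung_structural
    (p : ℕ) (hp : p.Prime) (H I : Type*) [DecidableEq I] [AddCommGroup H]
    [Module (ZMod p) H] [Coalgebra (ZMod p) H]
    (Z : (I →₀ ℕ) → H)
    (hZ : ∀ α : I →₀ ℕ,
      comul (R := ZMod p) (Z α) = ∑ q ∈ Finset.HasAntidiagonal.antidiagonal α, Z q.1 ⊗ₜ[ZMod p] Z q.2)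
    (hZc : ∀ α : I →₀ ℕ, counit (R := ZMod p) (Z α) = if α = 0 then 1 else 0)
    (V : H →ₗ[ZMod p] H)
    (hV : ∀ (f : H →ₗ[ZMod p] ZMod p) (x : H), f (V x) = convPow f p x) :
    ∀ α : I →₀ ℕ,
      (∀ β : I →₀ ℕ, α = p • β → V (Z α) = Z β) ∧
      ((∀ β : I →₀ ℕ, α ≠ p • β) → V (Z α) = 0) := by
  have : Fact p.Prime := ⟨hp⟩
  have apply_V : ∀ (f : Module.Dual (ZMod p) H) α, f (V (Z α)) =
      MvPowerSeries.coeff α (MvPowerSeries.expand p hp.ne_zero (genSeries Z f)) := by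
    intro f α
    rw [hV, convPow_apply_eq_coeff_genSeries_pow hZ hZc, MvPowerSeries.pow_char_eq_expand_zmod]
  intro α
  constructor
  · rintro β rfl
    refine Module.eval_apply_injective (ZMod p) (LinearMap.ext fun f => ?_)
    rw [Module.Dual.eval_apply, Module.Dual.eval_apply, apply_V, MvPowerSeries.coeff_expand_smul,
      coeff_genSeries]
  · intro hα
    rw [← Module.forall_dual_apply_eq_zero_iff (ZMod p)]
    intro f
    rw [apply_V, MvPowerSeries.coeff_expand_of_forall_ne_nsmul p hp.ne_zero _ hα]
end

section
/- Let a be an element of a vertex algebra V over ℤ such that aᵢ(a) = 0 for all i ≥ −1. Then for each k ≥ 0, the operator a₀^k (k-th power of the zero mode of a, acting on V) is divisible by k! as an operator, i.e., a₀^k maps V into k!·V. -/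
/-- A vertex algebra over `ℤ`: a `ℤ`-module `V` with a vacuum vector, additive modes
`aᵢ : V → V` (for `a ∈ V`, `i ∈ ℤ`) that truncate, vacuum/creation axioms, and the
Borcherds (Jacobi) identity.  The sums in the Borcherds identity are finite by
truncation, and are written using `finsum`. -/
class VertexAlgebraZ (V : Type*) [AddCommGroup V] where
  /-- the vacuum vector `1` -/
  vacuum : V
  /-- `mode a i b = aᵢ(b)`, where `Y(a,z)b = ∑ᵢ aᵢ(b) z^{-i-1}` -/
  mode : V → ℤ → V → V
  mode_add_left : ∀ a b : V, ∀ i : ℤ, ∀ c : V, mode (a + b) i c = mode a i c + mode b i c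
  mode_add_right : ∀ a : V, ∀ i : ℤ, ∀ b c : V, mode a i (b + c) = mode a i b + mode a i c
  /-- truncation: `aᵢ(b) = 0` for `i` large -/
  trunc : ∀ a b : V, ∃ N : ℤ, ∀ i ≥ N, mode a i b = 0
  /-- `Y(1,z) = id` -/
  vacuum_mode : ∀ i : ℤ, ∀ b : V, mode vacuum i b = if i = -1 then b else 0
  /-- creation: `a_{-1}(1) = a` -/
  create : ∀ a : V, mode a (-1) vacuum = a
  create_nonneg : ∀ a : V, ∀ i : ℤ, 0 ≤ i → mode a i vacuum = 0
  /-- the Borcherds identity -/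
  borcherds : ∀ a b c : V, ∀ p q r : ℤ,
    ∑ᶠ i : ℕ, (Ring.choose p i) • mode (mode a (r + i) b) (p + q - i) c =
      ∑ᶠ i : ℕ, ((-1 : ℤ) ^ i * Ring.choose r i) •
        (mode a (p + r - i) (mode b (q + i) c) -
          (Int.negOnePow r : ℤ) • mode b (q + r - i) (mode a (p + i) c))

namespace VAZaux
open VertexAlgebraZ

variable {V : Type*} [AddCommGroup V] [VertexAlgebraZ V]

/-- the mode as an additive hom -/
def modeHom (a : V) (i : ℤ) : V →+ V :=
  AddMonoidHom.mk' (mode a i) (fun b c => mode_add_right a i b c)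

@[simp] lemma mode_zero (a : V) (i : ℤ) : mode a i (0 : V) = 0 := (modeHom a i).map_zero

lemma mode_nsmul (a : V) (i : ℤ) (n : ℕ) (v : V) : mode a i (n • v) = n • mode a i v :=
  (modeHom a i).map_nsmul n v

@[simp] lemma zero_mode' (i : ℤ) (c : V) : mode (0 : V) i c = 0 := by
  have := mode_add_left (0 : V) 0 i c
  rw [add_zero] at this
  exact (left_eq_add.mp this)

lemma ringChoose_neg_one (n : ℕ) : Ring.choose (-1 : ℤ) n = (-1) ^ n := by
  rw [Ring.choose, show (-1 - (n:ℕ) + 1 : ℤ) = -(n:ℕ) by ring, Ring.multichoose_neg_self]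

/-- commutativity of modes -/
lemma mode_comm {a : V} (ha : ∀ i : ℤ, -1 ≤ i → mode a i a = 0) (p q : ℤ) (c : V) :
    mode a p (mode a q c) = mode a q (mode a p c) := by
  have hb := borcherds a a c p q 0
  have hL : ∑ᶠ i : ℕ, (Ring.choose p i) • mode (mode a (0 + i) a) (p + q - i) c = 0 := by
    rw [finsum_congr (fun i => ?_), finsum_zero]
    rw [ha (0 + i) (by omega), zero_mode', smul_zero]
  rw [hL] at hb
  have hR := finsum_eq_single
    (fun i : ℕ => ((-1 : ℤ) ^ i * Ring.choose (0:ℤ) i) •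
      (mode a (p + 0 - i) (mode a (q + i) c) -
        (Int.negOnePow 0 : ℤ) • mode a (q + 0 - i) (mode a (p + i) c))) 0
    (fun i hi => by
      rw [Ring.choose_zero_pos ℤ (Nat.pos_of_ne_zero hi), mul_zero, zero_smul])
  rw [hR] at hb
  simp only [Nat.cast_zero, add_zero, sub_zero, pow_zero, Ring.choose_zero_right, one_mul,
    Int.negOnePow_zero, Units.val_one, one_smul] at hb
  exact (sub_eq_zero.mp hb.symm)

lemma rel2 {a : V} (ha : ∀ i : ℤ, -1 ≤ i → mode a i a = 0) (q : ℤ) (c : V) :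
    ∑ᶠ i : ℕ, (mode a (-1 - i) (mode a (q + i) c) + mode a (q - 1 - i) (mode a i c)) = 0 := by
  have hb := borcherds a a c 0 q (-1)
  have hL : ∑ᶠ i : ℕ, (Ring.choose (0:ℤ) i) • mode (mode a (-1 + i) a) (0 + q - i) c = 0 := by
    rw [finsum_congr (fun i => ?_), finsum_zero]
    rw [ha (-1 + i) (by omega), zero_mode', smul_zero]
  rw [hL] at hb
  refine Eq.trans (finsum_congr fun i => ?_) hb.symm
  have h1 : ((-1 : ℤ) ^ i * Ring.choose (-1:ℤ) i) = 1 := by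
    rw [ringChoose_neg_one, ← mul_pow]; norm_num
  have h2 : (Int.negOnePow (-1) : ℤ) = -1 := by
    rw [show (-1 : ℤ) = 2 * (-1) + 1 by ring, Int.negOnePow_two_mul_add_one]
    norm_num
  rw [h1, h2, one_smul]
  rw [show (0 + -1 - (i:ℕ) : ℤ) = -1 - i by ring, show (q + -1 - (i:ℕ) : ℤ) = q - 1 - i by ring,
    show (0 + (i:ℕ) : ℤ) = i by ring]
  rw [neg_smul, one_smul, sub_neg_eq_add]

lemma pair_ext {a : V} (hcomm : ∀ p q c, mode a p (mode a q c) = mode a q (mode a p c))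
    {N : ℤ} {v : V} (hN : ∀ i ≥ N, mode a i v = 0) (n : ℤ) {lo hi LO HI : ℤ}
    (h1 : LO ≤ lo) (h2 : hi ≤ HI) (hlo : lo ≤ n - N + 1) (hhi : N ≤ hi) :
    ∑ p ∈ Finset.Ico lo hi, mode a p (mode a (n - p) v)
      = ∑ p ∈ Finset.Ico LO HI, mode a p (mode a (n - p) v) := by
  apply Finset.sum_subset (Finset.Ico_subset_Ico h1 h2)
  intro x hx hnx
  simp only [Finset.mem_Ico] at hx hnx
  rcases (by omega : x < lo ∨ hi ≤ x) with h | h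
  · rw [hN (n - x) (by omega), mode_zero]
  · rw [hcomm, hN x (by omega), mode_zero]

lemma pair_zero {a : V} (ha : ∀ i : ℤ, -1 ≤ i → mode a i a = 0)
    {N : ℤ} {v : V} (hN : ∀ i ≥ N, mode a i v = 0) (n : ℤ) {lo hi : ℤ}
    (hlo : lo ≤ n - N + 1) (hhi : N ≤ hi) :
    ∑ p ∈ Finset.Ico lo hi, mode a p (mode a (n - p) v) = 0 := by
  have hcomm := mode_comm ha
  set M : ℕ := (max N (N - n - 1)).toNat + 1 with hMdef
  have hM1 : N ≤ (M : ℤ) := by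
    have := Int.self_le_toNat (max N (N - n - 1))
    push_cast [hMdef]
    omega
  have hM2 : N - n - 1 ≤ (M : ℤ) := by
    have := Int.self_le_toNat (max N (N - n - 1))
    push_cast [hMdef]
    omega
  -- finsum to finset sum
  have hfin : ∑ᶠ i : ℕ, (mode a (-1 - i) (mode a (n + 1 + i) v) + mode a (n - i) (mode a i v)) = 0 := by
    have := rel2 ha (n + 1) v
    refine Eq.trans (finsum_congr fun i => ?_) this
    rw [show (n + 1 + (i:ℕ) : ℤ) = (n+1) + i by ring, show (n - (i:ℕ) : ℤ) = (n+1) - 1 - i by ring]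
  have hsupp : (Function.support fun i : ℕ =>
      (mode a (-1 - i) (mode a (n + 1 + i) v) + mode a (n - i) (mode a i v)))
      ⊆ ↑(Finset.range M) := by
    intro i hi
    simp only [Function.mem_support] at hi
    simp only [Finset.coe_range, Set.mem_Iio]
    by_contra hge
    have hge' : (M : ℤ) ≤ (i : ℕ) := by exact_mod_cast Nat.cast_le.mpr (le_of_not_gt hge)
    have z1 : mode a (n + 1 + i) v = 0 := hN _ (by omega)
    have z2 : mode a (i : ℕ) v = 0 := hN _ (by omega)
    rw [z1, z2, mode_zero, mode_zero, add_zero] at hi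
    exact hi rfl
  have h0 : ∑ i ∈ Finset.range M,
      (mode a (-1 - i) (mode a (n + 1 + i) v) + mode a (n - i) (mode a i v)) = 0 := by
    rw [← finsum_eq_sum_of_support_subset _ hsupp]
    exact hfin
  rw [Finset.sum_add_distrib] at h0
  -- first sum: reindex to Ico (-M) 0
  have e1 : ∑ i ∈ Finset.range M, mode a (-1 - i) (mode a (n + 1 + i) v)
      = ∑ p ∈ Finset.Ico (-(M:ℤ)) 0, mode a p (mode a (n - p) v) := by
    refine Finset.sum_nbij' (fun i : ℕ => (-1 - i : ℤ)) (fun p : ℤ => (-1 - p).toNat)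
      ?_ ?_ ?_ ?_ ?_ <;> intro x hx <;>
      simp only [Finset.mem_range, Finset.mem_Ico] at hx ⊢ <;> try omega
    rw [show (n - (-1 - (x:ℤ))) = n + 1 + x from by ring]
  -- second sum: commute then reindex to Ico 0 M
  have e2 : ∑ i ∈ Finset.range M, mode a (n - i) (mode a i v)
      = ∑ p ∈ Finset.Ico (0 : ℤ) (M:ℤ), mode a p (mode a (n - p) v) := by
    refine Finset.sum_nbij' (fun i : ℕ => (i : ℤ)) (fun p : ℤ => p.toNat)
      ?_ ?_ ?_ ?_ ?_ <;> intro x hx <;>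
      simp only [Finset.mem_range, Finset.mem_Ico] at hx ⊢ <;> try omega
    rw [hcomm]
  rw [e1, e2] at h0
  have hunion : ∑ p ∈ Finset.Ico (-(M:ℤ)) 0, mode a p (mode a (n - p) v)
      + ∑ p ∈ Finset.Ico (0:ℤ) (M:ℤ), mode a p (mode a (n - p) v)
      = ∑ p ∈ Finset.Ico (-(M:ℤ)) (M:ℤ), mode a p (mode a (n - p) v) :=
    by rw [← Finset.Ico_union_Ico_eq_Ico (show -(M:ℤ) ≤ 0 from by omega)
        (show (0:ℤ) ≤ (M:ℤ) from by omega),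
      Finset.sum_union (Finset.Ico_disjoint_Ico_consecutive _ _ _)]
  rw [hunion] at h0
  have g1 : ∑ p ∈ Finset.Ico lo hi, mode a p (mode a (n - p) v)
      = ∑ p ∈ Finset.Ico (min lo (-(M:ℤ))) (max hi (M:ℤ)), mode a p (mode a (n - p) v) :=
    pair_ext hcomm hN n (min_le_left _ _) (le_max_left _ _) hlo hhi
  have g2 : ∑ p ∈ Finset.Ico (-(M:ℤ)) (M:ℤ), mode a p (mode a (n - p) v)
      = ∑ p ∈ Finset.Ico (min lo (-(M:ℤ))) (max hi (M:ℤ)), mode a p (mode a (n - p) v) :=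
    pair_ext hcomm hN n (min_le_right lo (-(M:ℤ))) (le_max_right hi (M:ℤ))
      (show -(M:ℤ) ≤ n - N + 1 from by omega) (show N ≤ (M:ℤ) from hM1)
  rw [g1, ← g2, ← h0]

section Mprod
variable {a : V} (hc : ∀ p q c, mode a p (mode a q c) = mode a q (mode a p c))

/-- product of modes over a multiset of indices -/
def mprod (M : Multiset ℤ) (v : V) : V :=
  @Multiset.foldr ℤ V (mode a) ⟨fun p q c => (hc p q c)⟩ v M

@[simp] lemma mprod_zero_left (v : V) : mprod hc 0 v = v := rfl

@[simp] lemma mprod_cons (j : ℤ) (M : Multiset ℤ) (v : V) :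
    mprod hc (j ::ₘ M) v = mode a j (mprod hc M v) := by
  unfold mprod
  rw [Multiset.foldr_cons]

lemma mprod_add (M M' : Multiset ℤ) (v : V) :
    mprod hc (M + M') v = mprod hc M (mprod hc M' v) := by
  unfold mprod
  rw [Multiset.foldr_add]

@[simp] lemma mprod_zero_right (M : Multiset ℤ) : mprod hc M (0 : V) = 0 := by
  induction M using Multiset.induction_on with
  | empty => rfl
  | cons j M ih => rw [mprod_cons, ih, mode_zero]

lemma mprod_mode (M : Multiset ℤ) (j : ℤ) (v : V) :
    mprod hc M (mode a j v) = mode a j (mprod hc M v) := by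
  induction M using Multiset.induction_on with
  | empty => rfl
  | cons i M ih => rw [mprod_cons, mprod_cons, ih, hc]

lemma mprod_nsmul (M : Multiset ℤ) (m : ℕ) (v : V) :
    mprod hc M (m • v) = m • mprod hc M v := by
  induction M using Multiset.induction_on with
  | empty => rfl
  | cons i M ih => rw [mprod_cons, mprod_cons, ih, mode_nsmul]

lemma mprod_replicate (k : ℕ) (i : ℤ) (v : V) :
    mprod hc (Multiset.replicate k i) v = (fun u => mode a i u)^[k] v := by
  induction k with
  | zero => rfl
  | succ k ih =>
      rw [Multiset.replicate_succ, mprod_cons, ih, Function.iterate_succ_apply']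

lemma mprod_erase (M : Multiset ℤ) {j : ℤ} (hj : j ∈ M) (v : V) :
    mprod hc M v = mprod hc (M.erase j) (mode a j v) := by
  conv_lhs => rw [← Multiset.cons_erase hj]
  rw [mprod_cons, ← mprod_mode]

lemma iterate_nsmul (i : ℤ) (c m : ℕ) (v : V) :
    (fun u => mode a i u)^[c] (m • v) = m • (fun u => mode a i u)^[c] v := by
  induction c with
  | zero => rfl
  | succ c ih => rw [Function.iterate_succ_apply', Function.iterate_succ_apply', ih, mode_nsmul]

end Mprod

section Box
variable {V : Type*} [AddCommGroup V] [VertexAlgebraZ V]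

/-- the multiset of values of a tuple -/
def msOf {k : ℕ} (t : Fin k → ℤ) : Multiset ℤ := (List.ofFn t : List ℤ)

lemma msOf_succ {k : ℕ} (t : Fin (k+1) → ℤ) : msOf t = t 0 ::ₘ msOf (Fin.tail t) := by
  unfold msOf
  rw [List.ofFn_succ]
  rfl

lemma msOf_card {k : ℕ} (t : Fin k → ℤ) : Multiset.card (msOf t) = k := by
  simp [msOf]

lemma msOf_sum {k : ℕ} (t : Fin k → ℤ) : (msOf t).sum = ∑ i, t i := by
  simp [msOf, List.sum_ofFn]

lemma mem_msOf {k : ℕ} {t : Fin k → ℤ} {x : ℤ} : x ∈ msOf t ↔ ∃ i, t i = x := by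
  simp [msOf, List.mem_ofFn]

/-- tuples with entries in `[lo, hi)` summing to `n` -/
noncomputable def box (k : ℕ) (n lo hi : ℤ) : Finset (Fin k → ℤ) :=
  (Fintype.piFinset fun _ : Fin k => Finset.Ico lo hi).filter fun t => (∑ i, t i) = n

lemma mem_box {k : ℕ} {n lo hi : ℤ} {t : Fin k → ℤ} :
    t ∈ box k n lo hi ↔ (∀ i, lo ≤ t i ∧ t i < hi) ∧ (∑ i, t i) = n := by
  simp [box, Fintype.mem_piFinset, Finset.mem_Ico]

variable {a : V} (hc : ∀ p q c, mode a p (mode a q c) = mode a q (mode a p c))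

lemma mode_sum (j : ℤ) {ι : Type*} (s : Finset ι) (f : ι → V) :
    mode a j (∑ x ∈ s, f x) = ∑ x ∈ s, mode a j (f x) :=
  map_sum (modeHom a j) f s

lemma S_succ (k : ℕ) (n lo hi : ℤ) (v : V) :
    ∑ t ∈ box (k+1) n lo hi, mprod hc (msOf t) v
      = ∑ j ∈ Finset.Ico lo hi, mode a j (∑ t ∈ box k (n - j) lo hi, mprod hc (msOf t) v) := by
  simp only [mode_sum]
  rw [Finset.sum_sigma']
  refine Finset.sum_nbij' (fun t => ⟨t 0, Fin.tail t⟩)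
    (fun p => Fin.cons p.1 p.2) ?_ ?_ ?_ ?_ ?_
  · intro t ht
    rw [mem_box] at ht
    rw [Finset.mem_sigma]
    dsimp only
    rw [Finset.mem_Ico, mem_box]
    have hsum := Fin.sum_univ_succ t
    rw [ht.2] at hsum
    refine ⟨⟨(ht.1 0).1, (ht.1 0).2⟩, fun i => ht.1 i.succ, ?_⟩
    simp only [Fin.tail]
    omega
  · intro p hp
    rw [Finset.mem_sigma, Finset.mem_Ico, mem_box] at hp
    rw [mem_box]
    constructor
    · intro i
      refine Fin.cases ?_ ?_ i
      · rw [Fin.cons_zero]; exact hp.1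
      · intro i'; rw [Fin.cons_succ]; exact hp.2.1 i'
    · rw [Fin.sum_univ_succ, Fin.cons_zero]
      have : ∑ i : Fin k, (Fin.cons p.1 p.2 : Fin (k+1) → ℤ) i.succ = ∑ i : Fin k, p.2 i := by
        apply Finset.sum_congr rfl
        intro i _
        rw [Fin.cons_succ]
      rw [this, hp.2.2]
      ring
  · intro t ht
    dsimp only
    exact Fin.cons_self_tail t
  · intro p hp
    simp [Fin.cons_zero, Fin.tail_cons]
  · intro t ht
    dsimp only
    rw [msOf_succ, mprod_cons]

theorem S_eq_zero (ha : ∀ i : ℤ, -1 ≤ i → mode a i a = 0)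
    {N : ℤ} {v : V} (hN : ∀ i ≥ N, mode a i v = 0) :
    ∀ (k : ℕ) (n lo hi : ℤ), N ≤ hi → lo ≤ n - ((k:ℤ) + 1) * hi →
      ∑ t ∈ box (k+2) n lo hi, mprod hc (msOf t) v = 0 := by
  intro k
  induction k with
  | zero =>
    intro n lo hi hhi hlo
    push_cast at hlo
    have hlo2 : lo ≤ n - hi := by omega
    have hpz := pair_zero ha hN n (by omega : lo ≤ n - N + 1) hhi
    rw [show (0+2 : ℕ) = 2 from rfl]
    have e : ∑ t ∈ box 2 n lo hi, mprod hc (msOf t) v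
        = ∑ j ∈ (Finset.Ico lo hi).filter (fun j => lo ≤ n - j ∧ n - j < hi),
            mode a j (mode a (n - j) v) := by
      refine Finset.sum_nbij' (fun t => t 0) (fun j => ![j, n - j]) ?_ ?_ ?_ ?_ ?_
      · intro t ht
        rw [mem_box] at ht
        have h2 : t 1 = n - t 0 := by
          have := Fin.sum_univ_two t
          rw [ht.2] at this
          omega
        rw [Finset.mem_filter, Finset.mem_Ico]
        refine ⟨⟨(ht.1 0).1, (ht.1 0).2⟩, ?_, ?_⟩
        · rw [← h2]; exact (ht.1 1).1
        · rw [← h2]; exact (ht.1 1).2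
      · intro j hj
        rw [Finset.mem_filter, Finset.mem_Ico] at hj
        rw [mem_box]
        constructor
        · intro i
          fin_cases i
          · simpa using hj.1
          · simpa using hj.2
        · rw [Fin.sum_univ_two]
          simp only [Matrix.cons_val_zero, Matrix.cons_val_one, Matrix.head_cons]
          ring
      · intro t ht
        rw [mem_box] at ht
        have h2 : t 1 = n - t 0 := by
          have := Fin.sum_univ_two t
          rw [ht.2] at this
          omega
        funext i
        fin_cases i
        · simp
        · simp [h2]
      · intro j hj
        simp
      · intro t ht
        rw [mem_box] at ht
        have h2 : t 1 = n - t 0 := by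
          have := Fin.sum_univ_two t
          rw [ht.2] at this
          omega
        rw [msOf_succ, msOf_succ, mprod_cons, mprod_cons]
        show mode a (t 0) (mode a (t 1) (mprod hc (msOf (fun i : Fin 0 => t i.succ.succ)) v)) = _
        rw [show mprod hc (msOf (fun i : Fin 0 => t i.succ.succ)) v = v from rfl, h2]
    rw [e]
    rw [← hpz]
    apply Finset.sum_subset (Finset.filter_subset _ _)
    intro x hx hnx
    rw [Finset.mem_Ico] at hx
    rw [Finset.mem_filter, Finset.mem_Ico] at hnx
    have : hi ≤ n - x := by omega
    rw [hN (n - x) (by omega), mode_zero]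
  | succ k ih =>
    intro n lo hi hhi hlo
    rw [show k + 1 + 2 = (k + 2) + 1 from rfl, S_succ]
    rw [← Finset.sum_const_zero (s := Finset.Ico lo hi)]
    apply Finset.sum_congr rfl
    intro j hj
    rw [Finset.mem_Ico] at hj
    have harith : ((k:ℤ) + 1) * hi = ((k:ℤ) + 1 + 1) * hi - hi := by ring
    have hlo' : lo ≤ (n - j) - ((k:ℤ) + 1) * hi := by
      push_cast at hlo ⊢
      omega
    rw [ih (n - j) lo hi hhi hlo', mode_zero]

end Box

section Counting

/-- product of factorials of multiplicities -/
def Phi (M : Multiset ℤ) : ℕ := ∏ x ∈ M.toFinset, (M.count x).factorial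

@[simp] lemma Phi_zero : Phi 0 = 1 := by simp [Phi]

lemma Phi_cons (j : ℤ) (M : Multiset ℤ) : Phi (j ::ₘ M) = (M.count j + 1) * Phi M := by
  unfold Phi
  rw [Multiset.toFinset_cons]
  by_cases hj : j ∈ M.toFinset
  · rw [Finset.insert_eq_self.mpr hj]
    rw [← Finset.mul_prod_erase _ _ hj, ← Finset.mul_prod_erase _ _ hj]
    rw [Multiset.count_cons_self, Nat.factorial_succ, mul_assoc]
    congr 1
    congr 1
    apply Finset.prod_congr rfl
    intro x hx
    rw [Multiset.count_cons_of_ne (Finset.ne_of_mem_erase hx)]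
  · rw [Finset.prod_insert hj]
    have hj' : j ∉ M := fun h => hj (Multiset.mem_toFinset.mpr h)
    rw [Multiset.count_eq_zero_of_notMem hj', Multiset.count_cons_self,
      Multiset.count_eq_zero_of_notMem hj']
    simp only [Nat.factorial_one, zero_add, one_mul]
    apply Finset.prod_congr rfl
    intro x hx
    rw [Multiset.count_cons_of_ne]
    intro hxj
    exact hj (hxj ▸ hx)

lemma Phi_erase {M : Multiset ℤ} {j : ℤ} (hj : j ∈ M) :
    Phi M = M.count j * Phi (M.erase j) := by
  conv_lhs => rw [← Multiset.cons_erase hj]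
  rw [Phi_cons, Multiset.count_erase_self]
  congr 1
  have := Multiset.count_pos.mpr hj
  omega

lemma Phi_filter {M : Multiset ℤ} {j : ℤ} (hj : j ∈ M) :
    Phi M = (M.count j).factorial * Phi (M.filter (· ≠ j)) := by
  have hT : (M.filter (· ≠ j)).toFinset = M.toFinset.erase j := by
    ext x
    simp only [Multiset.mem_toFinset, Multiset.mem_filter, Finset.mem_erase]
    tauto
  unfold Phi
  rw [← Finset.mul_prod_erase _ _ (Multiset.mem_toFinset.mpr hj), hT]
  congr 1
  apply Finset.prod_congr rfl
  intro x hx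
  rw [Multiset.count_filter]
  rw [if_pos (Finset.ne_of_mem_erase hx)]

/-- tuples with a given multiset of values -/
def fib (k : ℕ) (M : Multiset ℤ) : Finset (Fin k → ℤ) :=
  (Fintype.piFinset fun _ : Fin k => M.toFinset).filter fun t => msOf t = M

lemma mem_fib {k : ℕ} {M : Multiset ℤ} {t : Fin k → ℤ} :
    t ∈ fib k M ↔ msOf t = M := by
  simp only [fib, Finset.mem_filter, Fintype.mem_piFinset, Multiset.mem_toFinset]
  constructor
  · exact fun h => h.2
  · intro h
    refine ⟨fun i => ?_, h⟩
    rw [← h]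
    exact mem_msOf.mpr ⟨i, rfl⟩

lemma card_fib : ∀ (k : ℕ) (M : Multiset ℤ), Multiset.card M = k →
    (fib k M).card * Phi M = k.factorial := by
  intro k
  induction k with
  | zero =>
    intro M hM
    rw [Multiset.card_eq_zero] at hM
    subst hM
    have h1 : fib 0 0 = {fun i : Fin 0 => (0:ℤ)} := by
      apply Finset.ext
      intro t
      rw [mem_fib, Finset.mem_singleton]
      constructor
      · intro _
        funext i
        exact absurd i.2 (by omega)
      · intro ht
        show ((List.ofFn t : List ℤ) : Multiset ℤ) = 0
        rw [List.ofFn_zero]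
        rfl
    rw [h1, Finset.card_singleton, Phi_zero]
    rfl
  | succ k ih =>
    intro M hM
    have hcard : (fib (k+1) M).card = ∑ j ∈ M.toFinset, (fib k (M.erase j)).card := by
      rw [← Finset.card_sigma]
      apply Finset.card_nbij' (i := fun t => (⟨t 0, Fin.tail t⟩ : Σ _ : ℤ, (Fin k → ℤ)))
        (j := fun p => Fin.cons p.1 p.2)
      · intro t ht
        rw [Finset.mem_coe, mem_fib] at ht
        rw [Finset.mem_coe, Finset.mem_sigma]
        dsimp only
        have h0 : t 0 ∈ M := by rw [← ht]; exact mem_msOf.mpr ⟨0, rfl⟩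
        refine ⟨Multiset.mem_toFinset.mpr h0, ?_⟩
        rw [mem_fib]
        have := msOf_succ t
        rw [ht] at this
        rw [← Multiset.erase_cons_head (t 0) (msOf (Fin.tail t)), ← this]
      · intro p hp
        rw [Finset.mem_coe, Finset.mem_sigma] at hp
        rw [Finset.mem_coe, mem_fib]
        rw [msOf_succ]
        dsimp only
        rw [Fin.cons_zero, Fin.tail_cons]
        rw [mem_fib.mp hp.2]
        exact Multiset.cons_erase (Multiset.mem_toFinset.mp hp.1)
      · intro t ht
        exact Fin.cons_self_tail t
      · intro p hp
        simp [Fin.cons_zero, Fin.tail_cons]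
    rw [hcard, Finset.sum_mul]
    have hstep : ∀ j ∈ M.toFinset,
        (fib k (M.erase j)).card * Phi M = M.count j * k.factorial := by
      intro j hj
      have hjM : j ∈ M := Multiset.mem_toFinset.mp hj
      rw [Phi_erase hjM]
      rw [show (fib k (M.erase j)).card * (M.count j * Phi (M.erase j))
            = M.count j * ((fib k (M.erase j)).card * Phi (M.erase j)) by ring]
      rw [ih (M.erase j) (by rw [Multiset.card_erase_of_mem hjM, hM]; rfl)]
    rw [Finset.sum_congr rfl hstep, ← Finset.sum_mul, Multiset.toFinset_sum_count_eq, hM,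
      Nat.factorial_succ]

end Counting

section Final
variable {V : Type*} [AddCommGroup V] [VertexAlgebraZ V] {a : V}

lemma mprod_fact (hc : ∀ p q c, mode a p (mode a q c) = mode a q (mode a p c)) {K : ℕ}
    (IH : ∀ m : ℕ, m < K → ∀ (i : ℤ) (u : V), ∃ w, (fun u => mode a i u)^[m] u = m.factorial • w)
    (M : Multiset ℤ) : (∀ j : ℤ, M.count j < K) →
      ∀ v : V, ∃ w : V, mprod hc M v = Phi M • w := by
  induction M using Multiset.strongInductionOn with
  | ih M IHM =>
    intro hM v
    by_cases h0 : M = 0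
    · subst h0
      exact ⟨v, by rw [Phi_zero, one_smul]; rfl⟩
    · obtain ⟨j, hj⟩ := Multiset.exists_mem_of_ne_zero h0
      set c := M.count j with hc_def
      set M' := M.filter (· ≠ j) with hM'_def
      have hsplit : M.filter (· = j) + M' = M := Multiset.filter_add_not _ M
      have hrep : M.filter (· = j) = Multiset.replicate c j := by
        rw [hc_def]
        exact Multiset.filter_eq' M j
      have hmp : mprod hc M v = (fun u => mode a j u)^[c] (mprod hc M' v) := by
        conv_lhs => rw [← hsplit]
        rw [mprod_add, hrep, mprod_replicate]
      have hjM' : j ∉ M' := by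
        rw [hM'_def]
        intro h
        exact (Multiset.mem_filter.mp h).2 rfl
      have hlt : M' < M :=
        lt_of_le_of_ne (Multiset.filter_le _ M) (fun hEq => hjM' (hEq ▸ hj))
      have hM'count : ∀ i : ℤ, M'.count i < K :=
        fun i => lt_of_le_of_lt (Multiset.count_le_of_le i (Multiset.filter_le _ M)) (hM i)
      obtain ⟨w1, hw1⟩ := IHM M' hlt hM'count v
      obtain ⟨w2, hw2⟩ := IH c (hM j) j w1
      refine ⟨w2, ?_⟩
      rw [hmp, hw1, iterate_nsmul, hw2, smul_smul, Phi_filter hj]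
      rw [← hc_def, ← hM'_def, Nat.mul_comm]

theorem pow_div (ha : ∀ i : ℤ, -1 ≤ i → mode a i a = 0) (k : ℕ) :
    ∀ (i : ℤ) (v : V), ∃ w, (fun u => mode a i u)^[k] v = k.factorial • w := by
  have hc := mode_comm ha
  induction k using Nat.strong_induction_on with
  | _ k IH =>
    match k, IH with
    | 0, _ => exact fun i v => ⟨v, by rw [Nat.factorial_zero, one_smul]; rfl⟩
    | 1, _ => exact fun i v => ⟨mode a i v, by rw [Nat.factorial_one, one_smul]; rfl⟩
    | (m+2), IH =>
      intro i v
      obtain ⟨N, hN⟩ := trunc a v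
      set hi : ℤ := max N (i + 1) with hi_def
      set n : ℤ := ((m:ℤ)+2) * i with n_def
      set lo : ℤ := min (n - ((m:ℤ)+1) * hi) i with lo_def
      have hzero := S_eq_zero hc ha hN m n lo hi (le_max_left _ _) (min_le_left _ _)
      set ct : Fin (m+2) → ℤ := fun _ => i with ct_def
      have hct : ct ∈ box (m+2) n lo hi := by
        rw [mem_box]
        refine ⟨fun _ => ⟨min_le_right _ _, lt_of_lt_of_le (lt_add_one i) (le_max_right _ _)⟩, ?_⟩
        rw [Finset.sum_const, Finset.card_univ, Fintype.card_fin, nsmul_eq_mul, n_def]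
        push_cast
        ring
      have hmsct : msOf ct = Multiset.replicate (m+2) i := by
        rw [ct_def]
        show ((List.ofFn fun _ : Fin (m+2) => i : List ℤ) : Multiset ℤ) = _
        rw [List.ofFn_const, Multiset.coe_replicate]
      have hsplit := Finset.add_sum_erase _ (fun t => mprod hc (msOf t) v) hct
      rw [hzero] at hsplit
      have hmain : (fun u => mode a i u)^[m+2] v
          = - ∑ t ∈ (box (m+2) n lo hi).erase ct, mprod hc (msOf t) v := by
        rw [← mprod_replicate hc, ← hmsct]
        exact eq_neg_of_add_eq_zero_left hsplit
      have hgroup : ∑ t ∈ (box (m+2) n lo hi).erase ct, mprod hc (msOf t) v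
          = ∑ M ∈ ((box (m+2) n lo hi).erase ct).image msOf,
              (((box (m+2) n lo hi).erase ct).filter (fun t => msOf t = M)).card
                • mprod hc M v :=
        Finset.sum_comp (fun M => mprod hc M v) msOf
      have key : ∀ M ∈ ((box (m+2) n lo hi).erase ct).image msOf,
          ∃ w, (((box (m+2) n lo hi).erase ct).filter (fun t => msOf t = M)).card
              • mprod hc M v = (m+2).factorial • w := by
        intro M hMim
        obtain ⟨t₀, ht₀mem, ht₀⟩ := Finset.mem_image.mp hMim
        obtain ⟨ht₀ne, ht₀box⟩ := Finset.mem_erase.mp ht₀mem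
        have hMcard : Multiset.card M = m + 2 := by rw [← ht₀, msOf_card]
        have hMsum : M.sum = n := by
          rw [← ht₀, msOf_sum]
          exact (mem_box.mp ht₀box).2
        have hMne : M ≠ Multiset.replicate (m+2) i := by
          intro hEq
          apply ht₀ne
          funext idx
          have : t₀ idx ∈ msOf t₀ := mem_msOf.mpr ⟨idx, rfl⟩
          rw [ht₀, hEq] at this
          exact Multiset.eq_of_mem_replicate this
        have hcount : ∀ j : ℤ, M.count j < m + 2 := by
          intro j
          rcases lt_or_eq_of_le (le_trans (Multiset.count_le_card j M) (le_of_eq hMcard)) with h | h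
          · exact h
          · exfalso
            have hrep : M = Multiset.replicate (m+2) j := by
              have hall := Multiset.count_eq_card.mp (by rw [hMcard]; exact h)
              have hall' : ∀ b ∈ M, b = j := fun b hb => (hall b hb).symm
              rw [← hMcard]
              exact Multiset.eq_replicate_card.mpr hall'
            have hsum' : ((m:ℤ)+2) * j = n := by
              rw [← hMsum, hrep, Multiset.sum_replicate, nsmul_eq_mul]
              push_cast
              ring
            have hji : j = i := by
              rw [n_def] at hsum'
              have h2 : ((m:ℤ)+2) ≠ 0 := by positivity
              exact mul_left_cancel₀ h2 hsum'
            exact hMne (hji ▸ hrep)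
        have hfib : ((box (m+2) n lo hi).erase ct).filter (fun t => msOf t = M)
            = fib (m+2) M := by
          apply Finset.ext
          intro t
          rw [Finset.mem_filter, mem_fib, Finset.mem_erase]
          constructor
          · exact fun h => h.2
          · intro ht
            refine ⟨⟨?_, ?_⟩, ht⟩
            · intro hEq
              apply hMne
              rw [← ht, hEq, hmsct]
            · rw [mem_box]
              constructor
              · intro idx
                have : t idx ∈ M := by rw [← ht]; exact mem_msOf.mpr ⟨idx, rfl⟩
                rw [← ht₀] at this
                obtain ⟨i₀, hi₀⟩ := mem_msOf.mp this
                rw [← hi₀]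
                exact (mem_box.mp ht₀box).1 i₀
              · rw [← msOf_sum, ht, hMsum]
        obtain ⟨w1, hw1⟩ := mprod_fact hc IH M hcount v
        refine ⟨w1, ?_⟩
        rw [hfib, hw1, smul_smul, card_fib (m+2) M hMcard]
      choose wf hwf using key
      refine ⟨- ∑ M ∈ (((box (m+2) n lo hi).erase ct).image msOf).attach, wf M.1 M.2, ?_⟩
      rw [hmain, hgroup]
      rw [← Finset.sum_attach (((box (m+2) n lo hi).erase ct).image msOf)
            (fun M => (((box (m+2) n lo hi).erase ct).filter (fun t => msOf t = M)).card
              • mprod hc M v)]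
      rw [Finset.sum_congr rfl (fun M _ => hwf M.1 M.2)]
      rw [← Finset.smul_sum, smul_neg]

end Final

end VAZaux

open VertexAlgebraZ in
/-- Corollary 3.2: if `a` is an element of a vertex algebra over `ℤ` with `aᵢ(a) = 0`
for all `i ≥ -1`, then the `k`-th power of the zero mode `a₀` is divisible by `k!` as
an operator on `V`. -/
theorem zero_mode_pow_div_factorial
    (V : Type*) [AddCommGroup V] [VertexAlgebraZ V] (a : V)
    (ha : ∀ i : ℤ, -1 ≤ i → mode a i a = 0) (k : ℕ) (v : V) :
    ∃ w : V, (fun u => mode a 0 u)^[k] v = (Nat.factorial k) • w := by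
  exact VAZaux.pow_div ha k 0 v
end

section
/- For a primitive pair of sequences (I, J) with Σ(I) = −Σ(J) > 0, where I has length m with m' distinct cyclic rotations and J has length n with n' distinct cyclic rotations, the rational number Σ(I)·m'·n'/(m·n) is an integer. -/
/-- The number of distinct cyclic rotations of a list. -/
def numRotations (I : List ℤ) : ℕ :=
  ((Finset.range I.length).image fun r => I.rotate r).card

/-- A pair `(I, J)` of finite sequences is primitive if it is not of the form
`(I₀^k, J₀^k)` for any `k ≥ 2` (concatenation of `k` copies). -/
def PrimitivePair (I J : List ℤ) : Prop :=
  ¬ ∃ k : ℕ, 2 ≤ k ∧ ∃ I₀ J₀ : List ℤ,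
      I = (List.replicate k I₀).flatten ∧ J = (List.replicate k J₀).flatten

private lemma rot_mul_add (I : List ℤ) {d : ℕ} (h : I.rotate d = I) :
    ∀ q s, I.rotate (d * q + s) = I.rotate s := by
  intro q
  induction q with
  | zero => intro s; simp
  | succ n ih =>
    intro s
    have e : d * (n + 1) + s = d * n + (d + s) := by ring
    rw [e, ih (d + s), ← List.rotate_rotate, h]

private lemma pow_of_comm : ∀ (n : ℕ) (B A : List ℤ), B.length ≤ n →
    A ++ B = B ++ A → A.length ∣ B.length →
    B = (List.replicate (B.length / A.length) A).flatten := by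
  intro n
  induction n with
  | zero =>
    intro B A hB _ _
    have : B = [] := List.eq_nil_of_length_eq_zero (Nat.le_zero.mp hB)
    simp [this]
  | succ n ih =>
    intro B A hB hcomm hdvd
    rcases eq_or_ne B [] with rfl | hBne
    · simp
    rcases eq_or_ne A [] with rfl | hAne
    · simp at hdvd
      exact absurd hdvd hBne
    have hApos : 0 < A.length := List.length_pos_iff.mpr hAne
    have hBpos : 0 < B.length := List.length_pos_iff.mpr hBne
    have hAleB : A.length ≤ B.length := Nat.le_of_dvd hBpos hdvd
    have hA : A = B.take A.length := by
      have h1 : (A ++ B).take A.length = A := List.take_left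
      have h2 : (B ++ A).take A.length = B.take A.length :=
        List.take_append_of_le_length hAleB
      rw [hcomm] at h1; rw [h2] at h1; exact h1.symm
    set C := B.drop A.length with hC
    have hBAC : B = A ++ C := by
      conv_lhs => rw [← List.take_append_drop A.length B, ← hA]
    have hcomm' : A ++ C = C ++ A := by
      have h3 : A ++ (A ++ C) = (A ++ C) ++ A := by rw [← hBAC]; exact hcomm
      rw [List.append_assoc] at h3
      exact List.append_cancel_left h3
    have hlenC : C.length = B.length - A.length := List.length_drop
    have hdvdC : A.length ∣ C.length := by
      rw [hlenC]; exact Nat.dvd_sub hdvd dvd_rfl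
    have hCn : C.length ≤ n := by omega
    have hCrep := ih C A hCn hcomm' hdvdC
    have hBlen : B.length = A.length + C.length := by
      rw [hBAC, List.length_append]
    have hdiv : B.length / A.length = C.length / A.length + 1 := by
      rw [hBlen, Nat.add_comm, Nat.add_div_right _ hApos]
    rw [hdiv, hBAC]
    conv_lhs => rw [hCrep]
    rw [List.replicate_succ, List.flatten_cons]

private lemma sum_replicate_flatten (k : ℕ) (A : List ℤ) :
    (List.replicate k A).flatten.sum = (k : ℤ) * A.sum := by
  rw [List.sum_flatten, List.map_replicate, List.sum_replicate, nsmul_eq_mul]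

private lemma replicate_mul_flatten (g a : ℕ) (A : List ℤ) :
    (List.replicate (g * a) A).flatten
      = (List.replicate g ((List.replicate a A).flatten)).flatten := by
  induction g with
  | zero => simp
  | succ n ih =>
    have e : (n + 1) * a = a + n * a := by ring
    rw [e, List.replicate_add, List.flatten_append, ih, List.replicate_succ,
      List.flatten_cons]

/-- Structure theorem: for nonempty `I`, the number of distinct rotations `d`
is the minimal positive period, it divides the length, and `I` is a power of its
first `d` elements. -/
private lemma rotation_structure (I : List ℤ) (hI : I ≠ []) :
    ∃ d : ℕ, 0 < d ∧ d ∣ I.length ∧ numRotations I = d ∧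
      I = (List.replicate (I.length / d) (I.take d)).flatten := by
  set m := I.length with hm
  have hmpos : 0 < m := List.length_pos_iff.mpr hI
  have hex : ∃ r, 0 < r ∧ I.rotate r = I := ⟨m, hmpos, List.rotate_length I⟩
  set d := Nat.find hex with hd
  obtain ⟨hdpos, hdrot⟩ := Nat.find_spec hex
  have hmin : ∀ s, s < d → ¬(0 < s ∧ I.rotate s = I) := fun s hs => Nat.find_min hex hs
  have hdm : d ≤ m := Nat.find_min' hex ⟨hmpos, List.rotate_length I⟩
  have hmod : ∀ r : ℕ, I.rotate r = I.rotate (r % d) := by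
    intro r
    conv_lhs => rw [← Nat.div_add_mod r d]
    exact rot_mul_add I hdrot (r / d) (r % d)
  have hdvd : d ∣ m := by
    have h1 : I.rotate (m % d) = I := by rw [← hmod, List.rotate_length]
    rcases Nat.eq_zero_or_pos (m % d) with h0 | hpos'
    · exact Nat.dvd_of_mod_eq_zero h0
    · exact absurd ⟨hpos', h1⟩ (hmin _ (Nat.mod_lt _ hdpos))
  have hinj : ∀ a b, a ≤ b → b < d → I.rotate a = I.rotate b → a = b := by
    intro a b hab hbd heq
    by_contra hne
    have hlt : a < b := lt_of_le_of_ne hab hne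
    set t := b - a with ht
    have htpos : 0 < t := by omega
    have htd : t < d := by omega
    have key : I.rotate t = I := by
      have h1 : (I.rotate a).rotate (m - a) = I := by
        rw [List.rotate_rotate]
        have e : a + (m - a) = m := by omega
        rw [e, List.rotate_length]
      have h2 : (I.rotate b).rotate (m - a) = I.rotate t := by
        rw [List.rotate_rotate]
        have e : b + (m - a) = m * 1 + t := by omega
        rw [e, rot_mul_add I (List.rotate_length I) 1 t]
      rw [heq, h2] at h1
      exact h1
    exact hmin t htd ⟨htpos, key⟩
  have hcard : numRotations I = d := by
    have himg : ((Finset.range m).image fun r => I.rotate r)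
        = ((Finset.range d).image fun r => I.rotate r) := by
      apply Finset.Subset.antisymm
      · intro x hx
        simp only [Finset.mem_image, Finset.mem_range] at hx ⊢
        obtain ⟨r, hr, hrx⟩ := hx
        exact ⟨r % d, Nat.mod_lt _ hdpos, by rw [← hmod]; exact hrx⟩
      · exact Finset.image_subset_image (Finset.range_subset_range.mpr hdm)
    rw [numRotations, ← hm, himg, Finset.card_image_of_injOn, Finset.card_range]
    intro a ha b hb heq
    simp only [Finset.mem_coe, Finset.mem_range] at ha hb
    rcases le_total a b with h | h
    · exact hinj a b h hb heq
    · exact (hinj b a h ha heq.symm).symm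
  have hrotd : I.rotate d = I.drop d ++ I.take d := List.rotate_eq_drop_append_take hdm
  have hcomm : I.take d ++ I.drop d = I.drop d ++ I.take d := by
    rw [List.take_append_drop, ← hrotd, hdrot]
  have hlentake : (I.take d).length = d := by
    rw [List.length_take]; omega
  have hlendrop : (I.drop d).length = m - d := List.length_drop
  have hdvddrop : (I.take d).length ∣ (I.drop d).length := by
    rw [hlentake, hlendrop]; exact Nat.dvd_sub hdvd dvd_rfl
  have hrep := pow_of_comm (I.drop d).length (I.drop d) (I.take d) le_rfl hcomm hdvddrop
  rw [hlentake, hlendrop] at hrep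
  have hdivm : m / d = (m - d) / d + 1 := by
    obtain ⟨k, hk⟩ := id hdvd
    have hkpos : 0 < k := by
      rcases Nat.eq_zero_or_pos k with rfl | h
      · simp at hk; omega
      · exact h
    have h1 : m - d = d * (k - 1) := by
      have e : k = (k - 1) + 1 := by omega
      rw [hk]
      conv_lhs => rw [e]
      rw [Nat.mul_add, Nat.mul_one]
      omega
    rw [h1, hk, Nat.mul_div_cancel_left _ hdpos, Nat.mul_div_cancel_left _ hdpos]
    omega
  refine ⟨d, hdpos, hdvd, hcard, ?_⟩
  rw [hdivm, List.replicate_succ, List.flatten_cons]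
  conv_lhs => rw [← List.take_append_drop d I]
  rw [hrep]

/-- For a primitive pair `(I, J)` with `Σ(I) = -Σ(J) > 0`, the rational number
`Σ(I)·m'·n'/(m·n)` is an integer, where `m, n` are the lengths and `m', n'` the numbers
of distinct cyclic rotations of `I`, `J`. -/
theorem primitive_pair_dvd (I J : List ℤ) (hI : I ≠ []) (hJ : J ≠ [])
    (hsum : J.sum = -I.sum) (hpos : 0 < I.sum) (hprim : PrimitivePair I J) :
    ((I.length * J.length : ℕ) : ℤ) ∣ I.sum * (numRotations I) * (numRotations J) := by
  obtain ⟨d, hdpos, hdvd, hdcard, hIrep⟩ := rotation_structure I hI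
  obtain ⟨e, hepos, hedvd, hecard, hJrep⟩ := rotation_structure J hJ
  set m := I.length with hm
  set n := J.length with hn
  set k₁ := m / d with hk₁
  set k₂ := n / e with hk₂
  have hmpos : 0 < m := List.length_pos_iff.mpr hI
  have hnpos : 0 < n := List.length_pos_iff.mpr hJ
  have hmdk : m = d * k₁ := (Nat.div_mul_cancel hdvd).symm.trans (Nat.mul_comm _ _)
  have hnek : n = e * k₂ := (Nat.div_mul_cancel hedvd).symm.trans (Nat.mul_comm _ _)
  have hk₁pos : 0 < k₁ := Nat.div_pos (Nat.le_of_dvd hmpos hdvd) hdpos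
  have hk₂pos : 0 < k₂ := Nat.div_pos (Nat.le_of_dvd hnpos hedvd) hepos
  have hIsum : I.sum = (k₁ : ℤ) * (I.take d).sum := by
    conv_lhs => rw [hIrep]
    exact sum_replicate_flatten _ _
  have hJsum : J.sum = (k₂ : ℤ) * (J.take e).sum := by
    conv_lhs => rw [hJrep]
    exact sum_replicate_flatten _ _
  have hcop : Nat.Coprime k₁ k₂ := by
    by_contra hnc
    set g := Nat.gcd k₁ k₂ with hg
    have hgne : g ≠ 1 := hnc
    have hgpos : 0 < g := Nat.gcd_pos_of_pos_left _ hk₁pos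
    have hg2 : 2 ≤ g := by omega
    apply hprim
    refine ⟨g, hg2, (List.replicate (k₁ / g) (I.take d)).flatten,
      (List.replicate (k₂ / g) (J.take e)).flatten, ?_, ?_⟩
    · conv_lhs => rw [hIrep]
      have e1 : k₁ = g * (k₁ / g) := (Nat.mul_div_cancel' (Nat.gcd_dvd_left _ _)).symm
      conv_lhs => rw [e1]
      exact replicate_mul_flatten _ _ _
    · conv_lhs => rw [hJrep]
      have e2 : k₂ = g * (k₂ / g) := (Nat.mul_div_cancel' (Nat.gcd_dvd_right _ _)).symm
      conv_lhs => rw [e2]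
      exact replicate_mul_flatten _ _ _
  have h1 : (k₁ : ℤ) ∣ I.sum := ⟨_, hIsum⟩
  have h2 : (k₂ : ℤ) ∣ I.sum := by
    have : I.sum = (k₂ : ℤ) * (-(J.take e).sum) := by
      have hIJ : I.sum = -J.sum := by omega
      rw [hIJ, hJsum]; ring
    exact ⟨_, this⟩
  have hic : IsCoprime (k₁ : ℤ) (k₂ : ℤ) := by
    rw [Int.isCoprime_iff_gcd_eq_one]
    simpa using hcop
  obtain ⟨t, ht⟩ := (hic.mul_dvd h1 h2 : ((k₁ : ℤ) * k₂) ∣ I.sum)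
  rw [hdcard, hecard]
  refine ⟨t, ?_⟩
  rw [ht, hmdk, hnek]
  push_cast
  ring
end
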